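/- Let a = V_n ⊗ ℝ^m with q = sl₂ ⊕ gl_m ⊆ gl(a) as above. Then the Spencer differential ∂_a : a* ⊗ q → Λ²a* ⊗ a, given by (∂_a φ)(u,v) = φ(u)·v − φ(v)·u, is injective on C¹(a,q) = a* ⊗ q when (n,m) ≠ (2,1) and n ≥ 2, m ≥ 1. -/

import Mathlib

/-!
A cochain `ψ` in the kernel satisfies `ψ(u)·v = ψ(v)·u`. For `u = e_i ⊗ e_b`, `v = e_k ⊗ e_c`
the left side lives in rows `k-1, k, k+1` and the right side in rows `i-1, i, i+1`, so suitable
entries isolate single coordinates of `ψ(e_i ⊗ e_b) = (αX + βH + γY, M)`: `α` sits in row `k-1`,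
`γ` in row `k+1`, and `β` is detected by the different `H`-eigenvalues `n - 2k` on two rows.

For `n ≥ 3`, the rows far from `0` (resp. `n`) force `ψ(e_0 ⊗ ·) = ψ(e_n ⊗ ·) = 0`; then every
`ψ(e_i ⊗ e_b)` annihilates `e_0 ⊗ ℝ^m` and `e_n ⊗ ℝ^m`, hence vanishes. For `m ≥ 2`, the right
side has nothing outside row `i` in a column `c ≠ b`, which kills the `sl₂`-part of each
`ψ(e_i ⊗ e_b)`; afterwards `M` is read off from any row `k ≠ i`.
-/

noncomputable section

open scoped BigOperators

/-- Coefficients `(α, β, γ)` representing `α·X + β·H + γ·Y ∈ sl(2,ℝ)`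
in the standard basis `X = x∂_y`, `H = x∂_x - y∂_y`, `Y = y∂_x`. -/
abbrev Sl2 : Type := ℝ × ℝ × ℝ

/-- `gl(m,ℝ)` -/
abbrev Gl (m : ℕ) : Type := Matrix (Fin m) (Fin m) ℝ

/-- `a = V_n ⊗ ℝ^m` where `V_n = S^n(ℝ²)`, in the basis `v^i ⊗ e_b`,
`v^i = (1/i!) x^{n-i} y^i`. -/
abbrev Avec (n m : ℕ) : Type := Matrix (Fin (n+1)) (Fin m) ℝ

/-- `q = sl₂ × gl_m` -/
abbrev Qlie (m : ℕ) : Type := Sl2 × Gl m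

/-- `g = q ⋉ a` as a vector space -/
abbrev Glie (n m : ℕ) : Type := Qlie m × Avec n m

/-- The Lie bracket on `sl₂` in the basis `X, H, Y`:
`[H,X] = 2X`, `[H,Y] = -2Y`, `[X,Y] = H`. -/
def sl2Bracket (p q : Sl2) : Sl2 :=
  (2*(p.2.1*q.1 - q.2.1*p.1), p.1*q.2.2 - q.1*p.2.2, 2*(q.2.1*p.2.2 - p.2.1*q.2.2))

/-- The matrix of `α·X + β·H + γ·Y` acting on `V_n` in the basis
`v^i = (1/i!)x^{n-i}y^i`, so `X v^i = v^{i-1}`, `H v^i = (n-2i)v^i`,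
`Y v^i = (n-i)(i+1) v^{i+1}`. -/
def sl2Mat (n : ℕ) (p : Sl2) : Matrix (Fin (n+1)) (Fin (n+1)) ℝ :=
  fun i j =>
    p.1 * (if (j:ℕ) = (i:ℕ)+1 then 1 else 0)
    + p.2.1 * (if j = i then (n:ℝ) - 2*(i:ℕ) else 0)
    + p.2.2 * (if (j:ℕ)+1 = (i:ℕ) then ((n:ℝ) - (i:ℕ) + 1) * (i:ℕ) else 0)

/-- The action of `q = sl₂ ⊕ gl_m` on `a = V_n ⊗ ℝ^m` (tensor product of the
natural actions). -/
def qAct (n m : ℕ) (q : Qlie m) (u : Avec n m) : Avec n m :=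
  sl2Mat n q.1 * u + u * q.2.transpose

/-- The semidirect product bracket on `g = q ⋉ a`:
`[A ⊕ u, B ⊕ v] = [A,B] ⊕ (A·v − B·u)`. -/
def gBracket {n m : ℕ} (x y : Glie n m) : Glie n m :=
  ((sl2Bracket x.1.1 y.1.1, x.1.2 * y.1.2 - y.1.2 * x.1.2),
   qAct n m x.1 y.2 - qAct n m y.1 x.2)

/-- `X` as an element of `g`. -/
def Xg (n m : ℕ) : Glie n m := (((1,0,0), 0), 0)

/-- `Y` as an element of `g`. -/
def Yg (n m : ℕ) : Glie n m := (((0,0,1), 0), 0)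

/-- The inclusion `a → g`. -/
def embA {n m : ℕ} (u : Avec n m) : Glie n m := (0, u)

section

variable {n m : ℕ}

theorem sl2Mat_apply_succ_col (p : Sl2) {j k : Fin (n+1)} (h : (k : ℕ) = j + 1) :
    sl2Mat n p j k = p.1 := by
  have hkj : k ≠ j := fun e => by simp [e] at h
  rw [sl2Mat, if_pos h, if_neg hkj, if_neg (by omega)]
  ring

theorem sl2Mat_apply_self (p : Sl2) (k : Fin (n+1)) :
    sl2Mat n p k k = p.2.1 * ((n : ℝ) - 2 * (k : ℕ)) := by
  simp [sl2Mat]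

theorem sl2Mat_apply_succ_row (p : Sl2) {j k : Fin (n+1)} (h : (j : ℕ) = k + 1) :
    sl2Mat n p j k = p.2.2 * (((n : ℝ) - (j : ℕ) + 1) * (j : ℕ)) := by
  have hkj : k ≠ j := fun e => by simp [e] at h
  rw [sl2Mat, if_pos h.symm, if_neg hkj, if_neg (by omega)]
  ring

theorem sl2Mat_apply_of_far (p : Sl2) {j k : Fin (n+1)} (h : (j : ℕ) + 1 < k ∨ (k : ℕ) + 1 < j) :
    sl2Mat n p j k = 0 := by
  have hkj : k ≠ j := fun e => by simp [e] at h
  rw [sl2Mat, if_neg (by omega), if_neg hkj, if_neg (by omega)]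
  ring

theorem sl2Mat_sub (p p' : Sl2) : sl2Mat n (p - p') = sl2Mat n p - sl2Mat n p' := by
  ext i j
  simp only [sl2Mat, Matrix.sub_apply, Prod.fst_sub, Prod.snd_sub]
  ring

theorem qAct_sub (p p' : Qlie m) (u : Avec n m) :
    qAct n m (p - p') u = qAct n m p u - qAct n m p' u := by
  simp only [qAct, Prod.fst_sub, Prod.snd_sub, sl2Mat_sub, Matrix.transpose_sub, Matrix.sub_mul,
    Matrix.mul_sub]
  abel

theorem qAct_single_apply (p : Qlie m) (k j : Fin (n+1)) (c c' : Fin m) :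
    qAct n m p (Matrix.single k c 1) j c' =
      sl2Mat n p.1 j k * (if c' = c then 1 else 0) + if j = k then p.2 c' c else 0 := by
  simp [qAct, Matrix.mul_apply, Matrix.single, ite_and, eq_comm]

theorem qAct_zero (u : Avec n m) : qAct n m 0 u = 0 := by
  ext
  simp [qAct, sl2Mat, Matrix.mul_apply]

theorem qAct_single_apply_pred_row (p : Qlie m) {j k : Fin (n+1)} (h : (k : ℕ) = j + 1)
    (c : Fin m) : qAct n m p (Matrix.single k c 1) j c = p.1.1 := by
  have hjk : j ≠ k := fun e => by simp [e] at h
  simp [qAct_single_apply, sl2Mat_apply_succ_col _ h, hjk]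

theorem qAct_single_apply_succ_row (p : Qlie m) {j k : Fin (n+1)} (h : (j : ℕ) = k + 1)
    (c : Fin m) :
    qAct n m p (Matrix.single k c 1) j c = p.1.2.2 * (((n : ℝ) - (j : ℕ) + 1) * (j : ℕ)) := by
  have hjk : j ≠ k := fun e => by simp [e] at h
  simp [qAct_single_apply, sl2Mat_apply_succ_row _ h, hjk]

theorem qAct_single_apply_self (p : Qlie m) (k : Fin (n+1)) (c c' : Fin m) :
    qAct n m p (Matrix.single k c 1) k c' =
      p.1.2.1 * ((n : ℝ) - 2 * (k : ℕ)) * (if c' = c then 1 else 0) + p.2 c' c := by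
  simp [qAct_single_apply, sl2Mat_apply_self]

theorem qAct_single_apply_of_far (p : Qlie m) {j k : Fin (n+1)}
    (h : (j : ℕ) + 1 < k ∨ (k : ℕ) + 1 < j) (c c' : Fin m) :
    qAct n m p (Matrix.single k c 1) j c' = 0 := by
  have hjk : j ≠ k := fun e => by simp [e] at h
  simp [qAct_single_apply, sl2Mat_apply_of_far _ h, hjk]

theorem qAct_single_apply_of_ne (p : Qlie m) {j k : Fin (n+1)} (hjk : j ≠ k) {c c' : Fin m}
    (hc : c' ≠ c) : qAct n m p (Matrix.single k c 1) j c' = 0 := by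
  simp [qAct_single_apply, hjk, hc]

theorem fst_eq_zero_of_qAct_single_apply {p : Qlie m} {c : Fin m} {j₁ k₁ j₂ k₂ k₃ k₄ : Fin (n+1)}
    (h₁ : (k₁ : ℕ) = j₁ + 1) (hX : qAct n m p (Matrix.single k₁ c 1) j₁ c = 0)
    (h₂ : (j₂ : ℕ) = k₂ + 1) (hY : qAct n m p (Matrix.single k₂ c 1) j₂ c = 0)
    (h₃₄ : k₃ ≠ k₄)
    (hH : qAct n m p (Matrix.single k₃ c 1) k₃ c = qAct n m p (Matrix.single k₄ c 1) k₄ c) :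
    p.1 = 0 := by
  rw [qAct_single_apply_pred_row p h₁] at hX
  rw [qAct_single_apply_succ_row p h₂] at hY
  simp only [qAct_single_apply_self, if_true, mul_one] at hH
  have hγ : p.1.2.2 = 0 := by
    have hj₂ : ((j₂ : ℕ) : ℝ) ≤ n := by exact_mod_cast Nat.lt_succ_iff.mp j₂.is_lt
    have hj₂' : ((j₂ : ℕ) : ℝ) ≠ 0 := by exact_mod_cast (by omega : (j₂ : ℕ) ≠ 0)
    exact (mul_eq_zero.mp hY).resolve_right (mul_ne_zero (by linarith) hj₂')
  have hβ : p.1.2.1 = 0 := by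
    have hk : ((k₄ : ℕ) : ℝ) - (k₃ : ℕ) ≠ 0 :=
      sub_ne_zero.mpr (by exact_mod_cast Fin.val_injective.ne h₃₄.symm)
    exact (mul_eq_zero.mp (by linear_combination hH / 2)).resolve_right hk
  exact Prod.ext hX (Prod.ext hβ hγ)

theorem snd_eq_zero_of_qAct_single_apply {p : Qlie m} (hp : p.1 = 0) (k : Fin (n+1))
    (h : ∀ c c', qAct n m p (Matrix.single k c 1) k c' = 0) : p.2 = 0 := by
  ext c' c
  simpa [qAct_single_apply_self, hp] using h c c'

theorem eq_zero_of_qAct_single_apply [Nonempty (Fin m)] {p : Qlie m}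
    {j₁ k₁ j₂ k₂ k₃ k₄ : Fin (n+1)} (h₁ : (k₁ : ℕ) = j₁ + 1) (h₂ : (j₂ : ℕ) = k₂ + 1)
    (h₃₄ : k₃ ≠ k₄) (hX : ∀ c, qAct n m p (Matrix.single k₁ c 1) j₁ c = 0)
    (hY : ∀ c, qAct n m p (Matrix.single k₂ c 1) j₂ c = 0)
    (h₃ : ∀ c c', qAct n m p (Matrix.single k₃ c 1) k₃ c' = 0)
    (h₄ : ∀ c c', qAct n m p (Matrix.single k₄ c 1) k₄ c' = 0) : p = 0 := by
  obtain ⟨c⟩ : Nonempty (Fin m) := inferInstance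
  have hp := fst_eq_zero_of_qAct_single_apply h₁ (hX c) h₂ (hY c) h₃₄ ((h₃ c c).trans (h₄ c c).symm)
  exact Prod.ext hp (snd_eq_zero_of_qAct_single_apply hp k₃ h₃)

theorem eq_zero_of_qAct_single_apply_of_two_le_row [Nonempty (Fin m)] {p : Qlie m} (hn : 3 ≤ n)
    (h : ∀ (k : Fin (n+1)) (c : Fin m) (j : Fin (n+1)) (c' : Fin m),
      2 ≤ (j : ℕ) → qAct n m p (Matrix.single k c 1) j c' = 0) : p = 0 :=
  eq_zero_of_qAct_single_apply (j₁ := ⟨2, by omega⟩) (k₁ := ⟨3, by omega⟩) (j₂ := ⟨2, by omega⟩)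
    (k₂ := ⟨1, by omega⟩) (k₃ := ⟨2, by omega⟩) (k₄ := ⟨3, by omega⟩) rfl rfl (by simp)
    (fun c => h _ c _ c le_rfl) (fun c => h _ c _ c le_rfl)
    (fun c c' => h _ c _ c' le_rfl) (fun c c' => h _ c _ c' (by simp))

theorem eq_zero_of_qAct_single_apply_of_row_le [Nonempty (Fin m)] {p : Qlie m} (hn : 3 ≤ n)
    (h : ∀ (k : Fin (n+1)) (c : Fin m) (j : Fin (n+1)) (c' : Fin m),
      (j : ℕ) + 2 ≤ n → qAct n m p (Matrix.single k c 1) j c' = 0) : p = 0 :=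
  eq_zero_of_qAct_single_apply (j₁ := ⟨n - 2, by omega⟩) (k₁ := ⟨n - 1, by omega⟩)
    (j₂ := ⟨n - 2, by omega⟩) (k₂ := ⟨n - 3, by omega⟩) (k₃ := ⟨n - 2, by omega⟩)
    (k₄ := ⟨n - 3, by omega⟩) (by simp; omega) (by simp; omega) (by simp [Fin.ext_iff]; omega)
    (fun c => h _ c _ c (by simp; omega)) (fun c => h _ c _ c (by simp; omega))
    (fun c c' => h _ c _ c' (by simp; omega)) (fun c c' => h _ c _ c' (by simp; omega))

theorem eq_zero_of_qAct_single_apply_of_first_last [Nonempty (Fin m)] {p : Qlie m} (hn : 1 ≤ n)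
    (h₀ : ∀ c j c', qAct n m p (Matrix.single 0 c 1) j c' = 0)
    (hlast : ∀ c j c', qAct n m p (Matrix.single (Fin.last n) c 1) j c' = 0) : p = 0 :=
  eq_zero_of_qAct_single_apply (j₁ := ⟨n - 1, by omega⟩) (k₁ := Fin.last n) (j₂ := ⟨1, by omega⟩)
    (k₂ := 0) (k₃ := 0) (k₄ := Fin.last n) (by simp; omega) rfl
    (by simp [Fin.ext_iff]; omega) (fun c => hlast c _ c) (fun c => h₀ c _ c)
    (fun c c' => h₀ c _ c') (fun c c' => hlast c _ c')

theorem fst_eq_zero_of_qAct_single_apply_off_row {p : Qlie m} (hn : 2 ≤ n) (i : Fin (n+1))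
    (c : Fin m) (h : ∀ k j, j ≠ i → qAct n m p (Matrix.single k c 1) j c = 0) : p.1 = 0 := by
  have of_rows : ∀ {j₁ k₁ j₂ k₂ k₃ k₄ : Fin (n+1)}, (k₁ : ℕ) = j₁ + 1 → (j₂ : ℕ) = k₂ + 1 →
      k₃ ≠ k₄ → j₁ ≠ i → j₂ ≠ i → k₃ ≠ i → k₄ ≠ i → p.1 = 0 :=
    fun h₁ h₂ h₃₄ n₁ n₂ n₃ n₄ => fst_eq_zero_of_qAct_single_apply h₁ (h _ _ n₁) h₂ (h _ _ n₂) h₃₄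
      ((h _ _ n₃).trans (h _ _ n₄).symm)
  obtain hi | hi | hi : (i : ℕ) = 0 ∨ (i : ℕ) = 1 ∨ 2 ≤ (i : ℕ) := by omega
  · refine of_rows (j₁ := ⟨1, by omega⟩) (k₁ := ⟨2, by omega⟩) (j₂ := ⟨1, by omega⟩)
      (k₂ := ⟨0, by omega⟩) (k₃ := ⟨1, by omega⟩) (k₄ := ⟨2, by omega⟩) rfl rfl ?_ ?_ ?_ ?_ ?_ <;>
      simp [Fin.ext_iff] <;> omega
  · refine of_rows (j₁ := ⟨0, by omega⟩) (k₁ := ⟨1, by omega⟩) (j₂ := ⟨2, by omega⟩)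
      (k₂ := ⟨1, by omega⟩) (k₃ := ⟨0, by omega⟩) (k₄ := ⟨2, by omega⟩) rfl rfl ?_ ?_ ?_ ?_ ?_ <;>
      simp [Fin.ext_iff] <;> omega
  · refine of_rows (j₁ := ⟨0, by omega⟩) (k₁ := ⟨1, by omega⟩) (j₂ := ⟨1, by omega⟩)
      (k₂ := ⟨0, by omega⟩) (k₃ := ⟨0, by omega⟩) (k₄ := ⟨1, by omega⟩) rfl rfl ?_ ?_ ?_ ?_ ?_ <;>
      simp [Fin.ext_iff] <;> omega

theorem Matrix.linearMap_eq_zero_of_apply_single {R M ι κ : Type*} [CommSemiring R]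
    [AddCommMonoid M] [Module R M] [Fintype ι] [Fintype κ] [DecidableEq ι] [DecidableEq κ]
    {f : Matrix ι κ R →ₗ[R] M} (h : ∀ i j, f (Matrix.single i j 1) = 0) : f = 0 :=
  (Matrix.stdBasis R ι κ).ext fun ⟨i, j⟩ => by
    rw [Matrix.stdBasis_eq_single, h, LinearMap.zero_apply]

section FirstProlongation

variable {ψ : Avec n m →ₗ[ℝ] Qlie m} (hψ : ∀ u v, qAct n m (ψ u) v = qAct n m (ψ v) u)
include hψ

theorem qAct_apply_single_single_eq_zero_of_far {i j : Fin (n+1)}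
    (h : (j : ℕ) + 1 < i ∨ (i : ℕ) + 1 < j) (b : Fin m) (k : Fin (n+1)) (c c' : Fin m) :
    qAct n m (ψ (Matrix.single i b 1)) (Matrix.single k c 1) j c' = 0 := by
  rw [hψ]
  exact qAct_single_apply_of_far _ h b c'

theorem qAct_apply_single_single_eq_zero_of_ne {i j : Fin (n+1)} (hji : j ≠ i) {b c' : Fin m}
    (hc : c' ≠ b) (k : Fin (n+1)) (c : Fin m) :
    qAct n m (ψ (Matrix.single i b 1)) (Matrix.single k c 1) j c' = 0 := by
  rw [hψ]
  exact qAct_single_apply_of_ne _ hji hc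

theorem qAct_apply_single_single_eq_zero_of_apply_eq_zero {k : Fin (n+1)} {c : Fin m}
    (h : ψ (Matrix.single k c 1) = 0) (i : Fin (n+1)) (b : Fin m) :
    qAct n m (ψ (Matrix.single i b 1)) (Matrix.single k c 1) = 0 := by
  rw [hψ, h, qAct_zero]

theorem apply_single_eq_zero_of_three_le (hn : 3 ≤ n) (i : Fin (n+1)) (b : Fin m) :
    ψ (Matrix.single i b 1) = 0 := by
  have : Nonempty (Fin m) := ⟨b⟩
  have hfirst : ∀ b, ψ (Matrix.single 0 b 1) = 0 := fun b =>
    eq_zero_of_qAct_single_apply_of_two_le_row hn fun k c j c' hj =>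
      qAct_apply_single_single_eq_zero_of_far hψ (by simp; omega) b k c c'
  have hlast : ∀ b, ψ (Matrix.single (Fin.last n) b 1) = 0 := fun b =>
    eq_zero_of_qAct_single_apply_of_row_le hn fun k c j c' hj =>
      qAct_apply_single_single_eq_zero_of_far hψ (by simp; omega) b k c c'
  exact eq_zero_of_qAct_single_apply_of_first_last (by omega : 1 ≤ n)
    (fun c j c' => congrFun (congrFun
      (qAct_apply_single_single_eq_zero_of_apply_eq_zero hψ (hfirst c) i b) j) c')
    (fun c j c' => congrFun (congrFun
      (qAct_apply_single_single_eq_zero_of_apply_eq_zero hψ (hlast c) i b) j) c')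

theorem apply_single_eq_zero_of_ne_one (hn : 2 ≤ n) (hm : m ≠ 1) (i : Fin (n+1)) (b : Fin m) :
    ψ (Matrix.single i b 1) = 0 := by
  have hfst : ∀ i (b : Fin m), (ψ (Matrix.single i b 1)).1 = 0 := by
    intro i b
    have : Nontrivial (Fin m) := Fin.nontrivial_iff_two_le.mpr (by have := b.pos; omega)
    obtain ⟨c, hcb⟩ := exists_ne b
    exact fst_eq_zero_of_qAct_single_apply_off_row hn i c fun k j hji =>
      qAct_apply_single_single_eq_zero_of_ne hψ hji hcb k c
  have : Nontrivial (Fin (n+1)) := Fin.nontrivial_iff_two_le.mpr (by omega)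
  obtain ⟨k, hki⟩ := exists_ne i
  refine Prod.ext (hfst i b) (snd_eq_zero_of_qAct_single_apply (hfst i b) k fun c c' => ?_)
  rw [hψ, qAct_single_apply, hfst k c, if_neg hki]
  simp [sl2Mat]

end FirstProlongation

end

theorem spencer_differential_injective_general (n m : ℕ) (hn : 2 ≤ n)
    (hex : ¬(n = 2 ∧ m = 1)) :
    Function.Injective (fun φ : Avec n m →ₗ[ℝ] Qlie m =>
      (fun u v : Avec n m => qAct n m (φ u) v - qAct n m (φ v) u)) := by
  intro φ₁ φ₂ h
  have hψ : ∀ u v, qAct n m ((φ₁ - φ₂) u) v = qAct n m ((φ₁ - φ₂) v) u := fun u v => by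
    simp only [LinearMap.sub_apply, qAct_sub]
    exact sub_eq_sub_iff_sub_eq_sub.mp (congrFun (congrFun h u) v)
  refine sub_eq_zero.mp (Matrix.linearMap_eq_zero_of_apply_single fun i b => ?_)
  obtain hn3 | hm : 3 ≤ n ∨ m ≠ 1 := by omega
  · exact apply_single_eq_zero_of_three_le hψ hn3 i b
  · exact apply_single_eq_zero_of_ne_one hψ hn hm i b

/-- the Spencer differential
`∂_a : a* ⊗ q → Λ²a* ⊗ a`, `(∂_a φ)(u,v) = φ(u)·v − φ(v)·u`, is injective on
`C¹(a,q) = a* ⊗ q` for `n ≥ 2`, `m ≥ 1`, `(n,m) ≠ (2,1)`. -/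
theorem spencer_differential_injective (n m : ℕ) (hn : 2 ≤ n) (hm : 1 ≤ m)
    (hex : ¬(n = 2 ∧ m = 1)) :
    Function.Injective (fun φ : Avec n m →ₗ[ℝ] Qlie m =>
      (fun u v : Avec n m => qAct n m (φ u) v - qAct n m (φ v) u)) :=
  spencer_differential_injective_general n m hn hex
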